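/- arXiv:2512.19143 — 3 statements merged into one kernel-verified Lean document; each statement's English description precedes it below -/
import Mathlib

section
/- Let L₀(x₀, φ, v, F) be a smooth Lagrangian density and let φ(t,x₀) be a smooth deformation satisfying the Euler–Lagrange equation ∂L₀/∂φ − div(∂L₀/∂F_φ) − d/dt(∂L₀/∂v) = 0. Then the configurational forces balance holds: ∂L₀/∂x₀ + div(F_φ* · ∂L₀/∂F_φ − L₀ I*) + d/dt((∂L₀/∂v) · F_φ) = 0, where F_φ* denotes the transpose of the spatial Jacobian F_φ = Dφ and I* the identity. -/
open scoped BigOperators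

section CfbHelpers

variable {α : Type*} [NormedAddCommGroup α] [NormedSpace ℝ α]

local notation "V3" => Fin 3 → ℝ
local notation "M33" => Fin 3 → Fin 3 → ℝ
local notation "EE" => (Fin 3 → ℝ) × (Fin 3 → ℝ) × (Fin 3 → ℝ) × (Fin 3 → Fin 3 → ℝ)

lemma cfb_vec_decomp (v : V3) : v = ∑ I, v I • (Pi.single I 1 : V3) := by
  conv_lhs => rw [← Finset.univ_sum_single v]
  refine Finset.sum_congr rfl fun I _ => ?_
  rw [← Pi.single_smul, smul_eq_mul, mul_one]

lemma cfb_mat_decomp (M : M33) :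
    M = ∑ i, ∑ J, M i J • (Pi.single i (Pi.single J 1) : M33) := by
  funext a b
  simp only [Finset.sum_apply, Pi.smul_apply, Pi.single_apply, smul_eq_mul, ite_apply,
    Pi.zero_apply, mul_ite, mul_one, mul_zero]
  rw [Finset.sum_comm]
  simp [Finset.sum_ite_eq, Finset.sum_ite_eq']

lemma cfb_clm_decomp (D : EE →L[ℝ] ℝ) (w : EE) :
    D w = (∑ I, w.1 I * D (Pi.single I 1, 0, 0, 0))
      + (∑ i, w.2.1 i * D (0, Pi.single i 1, 0, 0))
      + (∑ i, w.2.2.1 i * D (0, 0, Pi.single i 1, 0))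
      + (∑ i, ∑ J, w.2.2.2 i J * D (0, 0, 0, Pi.single i (Pi.single J 1))) := by
  have hw : w = (∑ I, w.1 I • ((Pi.single I 1, 0, 0, 0) : EE))
      + (∑ i, w.2.1 i • ((0, Pi.single i 1, 0, 0) : EE))
      + (∑ i, w.2.2.1 i • ((0, 0, Pi.single i 1, 0) : EE))
      + (∑ i, ∑ J, w.2.2.2 i J • ((0, 0, 0, Pi.single i (Pi.single J 1)) : EE)) := by
    refine Prod.ext ?_ (Prod.ext ?_ (Prod.ext ?_ ?_)) <;>
      simp [Prod.fst_sum, Prod.snd_sum, ← cfb_vec_decomp] <;>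
      exact cfb_mat_decomp _
  conv_lhs => rw [hw]
  simp only [map_add, map_sum, map_smul, smul_eq_mul]

lemma cfb_partial1 (f : EE → ℝ) (a b c : V3) (M : M33)
    (hf : DifferentiableAt ℝ f (a, b, c, M)) (v : V3) :
    fderiv ℝ (fun y => f (y, b, c, M)) a v = fderiv ℝ f (a, b, c, M) (v, 0, 0, 0) := by
  have h1 : HasFDerivAt (fun y : V3 => ((y, b, c, M) : EE))
      ((ContinuousLinearMap.id ℝ (V3)).prod 0) a :=
    (hasFDerivAt_id a).prodMk (hasFDerivAt_const _ _)
  have h2 := (hf.hasFDerivAt.comp a h1).fderiv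
  rw [show (fun y : V3 => f (y, b, c, M)) = f ∘ (fun y => (y, b, c, M)) from rfl, h2]
  rfl

lemma cfb_partial2 (f : EE → ℝ) (a b c : V3) (M : M33)
    (hf : DifferentiableAt ℝ f (a, b, c, M)) (v : V3) :
    fderiv ℝ (fun y => f (a, y, c, M)) b v = fderiv ℝ f (a, b, c, M) (0, v, 0, 0) := by
  have h1 : HasFDerivAt (fun y : V3 => ((a, y, c, M) : EE))
      ((0 : (V3) →L[ℝ] (V3)).prod ((ContinuousLinearMap.id ℝ (V3)).prod 0)) b :=
    (hasFDerivAt_const _ _).prodMk ((hasFDerivAt_id b).prodMk (hasFDerivAt_const _ _))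
  have h2 := (hf.hasFDerivAt.comp b h1).fderiv
  rw [show (fun y : V3 => f (a, y, c, M)) = f ∘ (fun y => (a, y, c, M)) from rfl, h2]
  rfl

lemma cfb_partial3 (f : EE → ℝ) (a b c : V3) (M : M33)
    (hf : DifferentiableAt ℝ f (a, b, c, M)) (v : V3) :
    fderiv ℝ (fun y => f (a, b, y, M)) c v = fderiv ℝ f (a, b, c, M) (0, 0, v, 0) := by
  have h1 : HasFDerivAt (fun y : V3 => ((a, b, y, M) : EE))
      ((0 : (V3) →L[ℝ] (V3)).prod ((0 : (V3) →L[ℝ] (V3)).prod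
        ((ContinuousLinearMap.id ℝ (V3)).prod 0))) c :=
    (hasFDerivAt_const _ _).prodMk ((hasFDerivAt_const _ _).prodMk
      ((hasFDerivAt_id c).prodMk (hasFDerivAt_const _ _)))
  have h2 := (hf.hasFDerivAt.comp c h1).fderiv
  rw [show (fun y : V3 => f (a, b, y, M)) = f ∘ (fun y => (a, b, y, M)) from rfl, h2]
  rfl

lemma cfb_partial4 (f : EE → ℝ) (a b c : V3) (M : M33)
    (hf : DifferentiableAt ℝ f (a, b, c, M)) (v : M33) :
    fderiv ℝ (fun N => f (a, b, c, N)) M v = fderiv ℝ f (a, b, c, M) (0, 0, 0, v) := by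
  have h1 : HasFDerivAt (fun N : M33 => ((a, b, c, N) : EE))
      ((0 : (M33) →L[ℝ] (V3)).prod ((0 : (M33) →L[ℝ] (V3)).prod
        ((0 : (M33) →L[ℝ] (V3)).prod (ContinuousLinearMap.id ℝ (M33))))) M :=
    (hasFDerivAt_const _ _).prodMk ((hasFDerivAt_const _ _).prodMk
      ((hasFDerivAt_const _ _).prodMk (hasFDerivAt_id M)))
  have h2 := (hf.hasFDerivAt.comp M h1).fderiv
  rw [show (fun N : M33 => f (a, b, c, N)) = f ∘ (fun N => (a, b, c, N)) from rfl, h2]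
  rfl

lemma cfb_fderiv_sliceX (g : ℝ × (Fin 3 → ℝ) → α) (t : ℝ) (x : V3)
    (hg : DifferentiableAt ℝ g (t, x)) (v : V3) :
    fderiv ℝ (fun y => g (t, y)) x v = fderiv ℝ g (t, x) (0, v) := by
  have h1 : HasFDerivAt (fun y : V3 => ((t, y) : ℝ × V3))
      ((0 : (V3) →L[ℝ] ℝ).prod (ContinuousLinearMap.id ℝ (V3))) x :=
    (hasFDerivAt_const _ _).prodMk (hasFDerivAt_id x)
  have h2 := (hg.hasFDerivAt.comp x h1).fderiv
  rw [show (fun y => g (t, y)) = g ∘ (fun y => (t, y)) from rfl, h2]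
  rfl

lemma cfb_deriv_sliceT (g : ℝ × (Fin 3 → ℝ) → α) (t : ℝ) (x : V3)
    (hg : DifferentiableAt ℝ g (t, x)) :
    deriv (fun s => g (s, x)) t = fderiv ℝ g (t, x) (1, 0) := by
  have h1 : HasDerivAt (fun s : ℝ => ((s, x) : ℝ × V3)) (1, 0) t :=
    (hasDerivAt_id t).prodMk (hasDerivAt_const t x)
  exact (hg.hasFDerivAt.comp_hasDerivAt t h1).deriv

lemma cfb_fderiv_clm_apply_const (g : α → ℝ) (hg : ContDiff ℝ (⊤ : ℕ∞) g) (z : α) (u w : α) :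
    fderiv ℝ (fun z' => fderiv ℝ g z' u) z w = fderiv ℝ (fderiv ℝ g) z w u := by
  have hg' : ContDiff ℝ (⊤ : ℕ∞) (fderiv ℝ g) := hg.fderiv_right (by simp)
  have hd : HasFDerivAt (fderiv ℝ g) (fderiv ℝ (fderiv ℝ g) z) z :=
    (hg'.differentiable (by simp) z).hasFDerivAt
  have h := (hd.clm_apply (hasFDerivAt_const u z)).fderiv
  rw [h]
  simp

lemma cfb_second_symm (g : α → ℝ) (hg : ContDiff ℝ (⊤ : ℕ∞) g) (z v w : α) :
    fderiv ℝ (fun z' => fderiv ℝ g z' v) z w = fderiv ℝ (fun z' => fderiv ℝ g z' w) z v := by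
  have hg1 : Differentiable ℝ g := hg.differentiable (by simp)
  have hg' : ContDiff ℝ (⊤ : ℕ∞) (fderiv ℝ g) := hg.fderiv_right (by simp)
  have hd : HasFDerivAt (fderiv ℝ g) (fderiv ℝ (fderiv ℝ g) z) z :=
    (hg'.differentiable (by simp) z).hasFDerivAt
  have hsymm := second_derivative_symmetric (f := g) (fun y => (hg1 y).hasFDerivAt) hd
  rw [cfb_fderiv_clm_apply_const g hg z v w, cfb_fderiv_clm_apply_const g hg z w v, hsymm]

lemma cfb_fderiv_proj {ι : Type*} [Fintype ι] {β : ι → Type*}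
    [∀ i, NormedAddCommGroup (β i)] [∀ i, NormedSpace ℝ (β i)]
    (g : α → ∀ i, β i) (z : α) (hg : DifferentiableAt ℝ g z) (k : ι) (v : α) :
    fderiv ℝ (fun y => g y k) z v = fderiv ℝ g z v k := by
  have h := ((ContinuousLinearMap.proj (R := ℝ) (φ := β) k).hasFDerivAt.comp z
    hg.hasFDerivAt).fderiv
  rw [show (fun y => g y k) = (ContinuousLinearMap.proj (R := ℝ) (φ := β) k) ∘ g from rfl, h]
  rfl

lemma cfb_sliceX (g : ℝ × (Fin 3 → ℝ) → α) (hg : ContDiff ℝ (⊤ : ℕ∞) g) (t : ℝ) :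
    ContDiff ℝ (⊤ : ℕ∞) (fun y => g (t, y)) :=
  hg.comp (contDiff_const.prodMk contDiff_id)

lemma cfb_sliceT (g : ℝ × (Fin 3 → ℝ) → α) (hg : ContDiff ℝ (⊤ : ℕ∞) g) (x : V3) :
    ContDiff ℝ (⊤ : ℕ∞) (fun s => g (s, x)) :=
  hg.comp (contDiff_id.prodMk contDiff_const)

lemma cfb_algebra (I : Fin 3) (x1 : Fin 3 → ℝ)
    (Fm dLFm B v : Fin 3 → Fin 3 → ℝ) (dLφ dLv c : Fin 3 → ℝ)
    (f : Fin 3 → Fin 3 → Fin 3 → ℝ)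
    (hsym : ∀ k M J, f k M J = f k J M)
    (hEL : ∀ k, dLφ k = (∑ J, B k J) + c k) :
    x1 I + (∑ J, ((∑ k, (Fm k I * B k J + dLFm k J * f k I J))
        - (if I = J then (x1 J + (∑ k, Fm k J * dLφ k) + (∑ k, v k J * dLv k)
            + (∑ k, ∑ M, f k M J * dLFm k M)) else 0)))
      + (∑ k, (c k * Fm k I + dLv k * v k I)) = 0 := by
  rw [Finset.sum_sub_distrib, Finset.sum_ite_eq]
  simp only [Finset.mem_univ, if_true, hEL]
  have hswap : ∑ J, ∑ k, (Fm k I * B k J + dLFm k J * f k I J)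
      = ∑ k, ∑ J, (Fm k I * B k J + dLFm k J * f k I J) := Finset.sum_comm
  rw [hswap]
  have h1 : ∀ k, ∑ J, (Fm k I * B k J + dLFm k J * f k I J)
      = Fm k I * (∑ J, B k J) + ∑ J, dLFm k J * f k I J := by
    intro k; rw [Finset.sum_add_distrib, Finset.mul_sum]
  simp only [h1]
  have h2 : ∑ k, ∑ M, f k M I * dLFm k M = ∑ k, ∑ J, dLFm k J * f k I J := by
    refine Finset.sum_congr rfl fun k _ => Finset.sum_congr rfl fun M _ => ?_
    rw [hsym k M I, mul_comm]
  rw [h2]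
  simp only [mul_add, Finset.sum_add_distrib]
  ring_nf
  simp [mul_comm]
  ring

end CfbHelpers

/-- configurational forces balance
`∂L₀/∂x₀ + div(F_φ* · ∂L₀/∂F_φ − L₀ I*) + d/dt((∂L₀/∂v) · F_φ) = 0`
holds along solutions of the Euler–Lagrange equation. -/
theorem configurational_forces_balance
    (L₀ : (Fin 3 → ℝ) → (Fin 3 → ℝ) → (Fin 3 → ℝ) → (Fin 3 → Fin 3 → ℝ) → ℝ)
    (φ : ℝ → (Fin 3 → ℝ) → (Fin 3 → ℝ))
    (Ω₀ : Set (Fin 3 → ℝ)) (hΩ : IsOpen Ω₀)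
    (hL : ContDiff ℝ (⊤ : ℕ∞) (fun p : (Fin 3 → ℝ) × (Fin 3 → ℝ) × (Fin 3 → ℝ) × (Fin 3 → Fin 3 → ℝ) =>
      L₀ p.1 p.2.1 p.2.2.1 p.2.2.2))
    (hφ : ContDiff ℝ (⊤ : ℕ∞) (fun p : ℝ × (Fin 3 → ℝ) => φ p.1 p.2))
    -- Lagrangian velocity and deformation gradient
    (V : ℝ → (Fin 3 → ℝ) → (Fin 3 → ℝ))
    (hV : ∀ t x, V t x = deriv (fun s => φ s x) t)
    (F : ℝ → (Fin 3 → ℝ) → (Fin 3 → Fin 3 → ℝ))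
    (hF : ∀ t x i j, F t x i j = fderiv ℝ (fun y => φ t y i) x (Pi.single j 1))
    -- partial derivatives of the Lagrangian density along the jet of φ
    (dLx dLφ dLv : ℝ → (Fin 3 → ℝ) → (Fin 3 → ℝ))
    (dLF : ℝ → (Fin 3 → ℝ) → (Fin 3 → Fin 3 → ℝ))
    (hdLx : ∀ t x I, dLx t x I =
      fderiv ℝ (fun y => L₀ y (φ t x) (V t x) (F t x)) x (Pi.single I 1))
    (hdLφ : ∀ t x i, dLφ t x i =
      fderiv ℝ (fun y => L₀ x y (V t x) (F t x)) (φ t x) (Pi.single i 1))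
    (hdLv : ∀ t x i, dLv t x i =
      fderiv ℝ (fun v => L₀ x (φ t x) v (F t x)) (V t x) (Pi.single i 1))
    (hdLF : ∀ t x i J, dLF t x i J =
      fderiv ℝ (fun M => L₀ x (φ t x) (V t x) M) (F t x) (Pi.single i (Pi.single J 1)))
    -- Lagrangian density evaluated along the jet of φ
    (Ldens : ℝ → (Fin 3 → ℝ) → ℝ)
    (hLdens : ∀ t x, Ldens t x = L₀ x (φ t x) (V t x) (F t x))
    -- Euler–Lagrange equation on Ω₀
    (hEL : ∀ t : ℝ, ∀ x ∈ Ω₀, ∀ i,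
      dLφ t x i - (∑ J, fderiv ℝ (fun y => dLF t y i J) x (Pi.single J 1))
        - deriv (fun s => dLv s x i) t = 0) :
    ∀ t : ℝ, ∀ x ∈ Ω₀, ∀ I,
      dLx t x I
        + (∑ J, fderiv ℝ
            (fun y => (∑ k, F t y k I * dLF t y k J) - (if I = J then Ldens t y else 0))
            x (Pi.single J 1))
        + deriv (fun s => ∑ k, dLv s x k * F s x k I) t = 0 := by
  have hφd : Differentiable ℝ (fun p : ℝ × (Fin 3 → ℝ) => φ p.1 p.2) :=
    hφ.differentiable (by simp)
  have hLd : Differentiable ℝ (fun q : (Fin 3 → ℝ) × (Fin 3 → ℝ) × (Fin 3 → ℝ) ×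
      (Fin 3 → Fin 3 → ℝ) => L₀ q.1 q.2.1 q.2.2.1 q.2.2.2) := hL.differentiable (by simp)
  -- (1) V in terms of full derivative of Φ
  have hVfd : ∀ s y, V s y =
      fderiv ℝ (fun p : ℝ × (Fin 3 → ℝ) => φ p.1 p.2) (s, y) (1, 0) := by
    intro s y
    rw [hV s y]
    exact cfb_deriv_sliceT _ s y (hφd (s, y))
  -- (2) F in terms of full derivative of Φ
  have hFfd : ∀ s y k j, F s y k j =
      fderiv ℝ (fun p : ℝ × (Fin 3 → ℝ) => φ p.1 p.2) (s, y) (0, Pi.single j 1) k := by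
    intro s y k j
    rw [hF s y k j]
    have hgd : DifferentiableAt ℝ (fun y' => φ s y') y :=
      (hφd (s, y)).comp y ((differentiableAt_const s).prodMk differentiableAt_id)
    rw [cfb_fderiv_proj (fun y' => φ s y') y hgd k (Pi.single j 1)]
    rw [show (fun y' => φ s y') =
      (fun y' => (fun p : ℝ × (Fin 3 → ℝ) => φ p.1 p.2) (s, y')) from rfl,
      cfb_fderiv_sliceX _ s y (hφd _)]
  -- (3) joint smoothness of V and F
  have hDc : ContDiff ℝ (⊤ : ℕ∞) (fderiv ℝ (fun p : ℝ × (Fin 3 → ℝ) => φ p.1 p.2)) :=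
    hφ.fderiv_right (by simp)
  have hVc : ContDiff ℝ (⊤ : ℕ∞) (fun p : ℝ × (Fin 3 → ℝ) => V p.1 p.2) := by
    have h : (fun p : ℝ × (Fin 3 → ℝ) => V p.1 p.2)
        = fun p => fderiv ℝ (fun p' : ℝ × (Fin 3 → ℝ) => φ p'.1 p'.2) p (1, 0) :=
      funext fun p => hVfd p.1 p.2
    rw [h]
    exact hDc.clm_apply contDiff_const
  have hFc : ContDiff ℝ (⊤ : ℕ∞) (fun p : ℝ × (Fin 3 → ℝ) => F p.1 p.2) := by
    refine contDiff_pi.2 fun k => contDiff_pi.2 fun j => ?_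
    have h : (fun p : ℝ × (Fin 3 → ℝ) => F p.1 p.2 k j)
        = fun p => (ContinuousLinearMap.proj k : (Fin 3 → ℝ) →L[ℝ] ℝ)
            (fderiv ℝ (fun p' : ℝ × (Fin 3 → ℝ) => φ p'.1 p'.2) p (0, Pi.single j 1)) :=
      funext fun p => hFfd p.1 p.2 k j
    rw [h]
    exact (ContinuousLinearMap.proj k).contDiff.comp (hDc.clm_apply contDiff_const)
  -- (4) jet map smooth
  have hGc : ContDiff ℝ (⊤ : ℕ∞) (fun p : ℝ × (Fin 3 → ℝ) =>
      ((p.2, φ p.1 p.2, V p.1 p.2, F p.1 p.2) :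
        (Fin 3 → ℝ) × (Fin 3 → ℝ) × (Fin 3 → ℝ) × (Fin 3 → Fin 3 → ℝ))) :=
    contDiff_snd.prodMk (hφ.prodMk (hVc.prodMk hFc))
  -- (5) derivative of L along the jet, smooth in (t, x)
  have hdLc : ContDiff ℝ (⊤ : ℕ∞) (fun p : ℝ × (Fin 3 → ℝ) =>
      fderiv ℝ (fun q : (Fin 3 → ℝ) × (Fin 3 → ℝ) × (Fin 3 → ℝ) × (Fin 3 → Fin 3 → ℝ) =>
        L₀ q.1 q.2.1 q.2.2.1 q.2.2.2) (p.2, φ p.1 p.2, V p.1 p.2, F p.1 p.2)) :=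
    (hL.fderiv_right (by simp)).comp hGc
  -- (6) identifications of the partials with the full derivative of L
  have hdLx' : ∀ s y Iv, dLx s y Iv =
      fderiv ℝ (fun q : (Fin 3 → ℝ) × (Fin 3 → ℝ) × (Fin 3 → ℝ) × (Fin 3 → Fin 3 → ℝ) =>
        L₀ q.1 q.2.1 q.2.2.1 q.2.2.2) (y, φ s y, V s y, F s y) (Pi.single Iv 1, 0, 0, 0) := by
    intro s y Iv
    rw [hdLx s y Iv]
    exact cfb_partial1 _ y (φ s y) (V s y) (F s y) (hLd _) _
  have hdLφ' : ∀ s y k, dLφ s y k =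
      fderiv ℝ (fun q : (Fin 3 → ℝ) × (Fin 3 → ℝ) × (Fin 3 → ℝ) × (Fin 3 → Fin 3 → ℝ) =>
        L₀ q.1 q.2.1 q.2.2.1 q.2.2.2) (y, φ s y, V s y, F s y) (0, Pi.single k 1, 0, 0) := by
    intro s y k
    rw [hdLφ s y k]
    exact cfb_partial2 _ y (φ s y) (V s y) (F s y) (hLd _) _
  have hdLv' : ∀ s y k, dLv s y k =
      fderiv ℝ (fun q : (Fin 3 → ℝ) × (Fin 3 → ℝ) × (Fin 3 → ℝ) × (Fin 3 → Fin 3 → ℝ) =>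
        L₀ q.1 q.2.1 q.2.2.1 q.2.2.2) (y, φ s y, V s y, F s y) (0, 0, Pi.single k 1, 0) := by
    intro s y k
    rw [hdLv s y k]
    exact cfb_partial3 _ y (φ s y) (V s y) (F s y) (hLd _) _
  have hdLF' : ∀ s y k J, dLF s y k J =
      fderiv ℝ (fun q : (Fin 3 → ℝ) × (Fin 3 → ℝ) × (Fin 3 → ℝ) × (Fin 3 → Fin 3 → ℝ) =>
        L₀ q.1 q.2.1 q.2.2.1 q.2.2.2) (y, φ s y, V s y, F s y)
        (0, 0, 0, Pi.single k (Pi.single J 1)) := by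
    intro s y k J
    rw [hdLF s y k J]
    exact cfb_partial4 _ y (φ s y) (V s y) (F s y) (hLd _) _
  -- (7) smoothness of the various slices
  have hdLapp : ∀ u, ContDiff ℝ (⊤ : ℕ∞) (fun p : ℝ × (Fin 3 → ℝ) =>
      fderiv ℝ (fun q : (Fin 3 → ℝ) × (Fin 3 → ℝ) × (Fin 3 → ℝ) × (Fin 3 → Fin 3 → ℝ) =>
        L₀ q.1 q.2.1 q.2.2.1 q.2.2.2) (p.2, φ p.1 p.2, V p.1 p.2, F p.1 p.2) u) :=
    fun u => hdLc.clm_apply contDiff_const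
  have hdLF_y : ∀ s k J, ContDiff ℝ (⊤ : ℕ∞) (fun y => dLF s y k J) := by
    intro s k J
    have h : (fun y => dLF s y k J) = fun y => (fun p : ℝ × (Fin 3 → ℝ) =>
        fderiv ℝ (fun q : (Fin 3 → ℝ) × (Fin 3 → ℝ) × (Fin 3 → ℝ) × (Fin 3 → Fin 3 → ℝ) =>
          L₀ q.1 q.2.1 q.2.2.1 q.2.2.2) (p.2, φ p.1 p.2, V p.1 p.2, F p.1 p.2)
          (0, 0, 0, Pi.single k (Pi.single J 1))) (s, y) :=
      funext fun y => hdLF' s y k J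
    rw [h]
    exact cfb_sliceX _ (hdLapp _) s
  have hdLv_s : ∀ y k, ContDiff ℝ (⊤ : ℕ∞) (fun s => dLv s y k) := by
    intro y k
    have h : (fun s => dLv s y k) = fun s => (fun p : ℝ × (Fin 3 → ℝ) =>
        fderiv ℝ (fun q : (Fin 3 → ℝ) × (Fin 3 → ℝ) × (Fin 3 → ℝ) × (Fin 3 → Fin 3 → ℝ) =>
          L₀ q.1 q.2.1 q.2.2.1 q.2.2.2) (p.2, φ p.1 p.2, V p.1 p.2, F p.1 p.2)
          (0, 0, Pi.single k 1, 0)) (s, y) :=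
      funext fun s => hdLv' s y k
    rw [h]
    exact cfb_sliceT _ (hdLapp _) y
  have hF_y : ∀ s k j, ContDiff ℝ (⊤ : ℕ∞) (fun y => F s y k j) := fun s k j =>
    cfb_sliceX _ (contDiff_pi.1 (contDiff_pi.1 hFc k) j) s
  have hF_s : ∀ y k j, ContDiff ℝ (⊤ : ℕ∞) (fun s => F s y k j) := fun y k j =>
    cfb_sliceT _ (contDiff_pi.1 (contDiff_pi.1 hFc k) j) y
  have hV_y : ∀ s k, ContDiff ℝ (⊤ : ℕ∞) (fun y => V s y k) := fun s k =>
    cfb_sliceX _ (contDiff_pi.1 hVc k) s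
  have hLdens_y : ∀ s, ContDiff ℝ (⊤ : ℕ∞) (fun y => Ldens s y) := by
    intro s
    have h : (fun y => Ldens s y) = fun y => (fun p : ℝ × (Fin 3 → ℝ) =>
        L₀ p.2 (φ p.1 p.2) (V p.1 p.2) (F p.1 p.2)) (s, y) :=
      funext fun y => hLdens s y
    rw [h]
    exact cfb_sliceX _ (hL.comp hGc) s
  intro t x hx I
  -- divergence term, product rule
  have hdiv : ∀ J : Fin 3, fderiv ℝ
      (fun y => (∑ k, F t y k I * dLF t y k J) - (if I = J then Ldens t y else 0))
      x (Pi.single J 1)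
      = (∑ k, (F t x k I * fderiv ℝ (fun y => dLF t y k J) x (Pi.single J 1)
          + dLF t x k J * fderiv ℝ (fun y => F t y k I) x (Pi.single J 1)))
        - (if I = J then fderiv ℝ (fun y => Ldens t y) x (Pi.single J 1) else 0) := by
    intro J
    have hsum_d : DifferentiableAt ℝ (fun y => ∑ k, F t y k I * dLF t y k J) x :=
      DifferentiableAt.fun_sum fun k _ =>
        ((hF_y t k I).differentiable (by simp) x).mul ((hdLF_y t k J).differentiable (by simp) x)
    have hsum_eq : fderiv ℝ (fun y => ∑ k, F t y k I * dLF t y k J) x (Pi.single J 1)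
        = ∑ k, (F t x k I * fderiv ℝ (fun y => dLF t y k J) x (Pi.single J 1)
            + dLF t x k J * fderiv ℝ (fun y => F t y k I) x (Pi.single J 1)) := by
      rw [fderiv_fun_sum (fun k _ =>
        ((hF_y t k I).differentiable (by simp) x).fun_mul ((hdLF_y t k J).differentiable (by simp) x))]
      rw [ContinuousLinearMap.sum_apply]
      refine Finset.sum_congr rfl fun k _ => ?_
      rw [fderiv_fun_mul ((hF_y t k I).differentiable (by simp) x)
        ((hdLF_y t k J).differentiable (by simp) x)]
      simp [smul_eq_mul]
    by_cases hIJ : I = J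
    · simp only [if_pos hIJ]
      rw [fderiv_fun_sub hsum_d ((hLdens_y t).differentiable (by simp) x),
        ContinuousLinearMap.sub_apply, hsum_eq]
    · simp only [if_neg hIJ, sub_zero, hsum_eq]
  -- time term, product rule
  have htime : deriv (fun s => ∑ k, dLv s x k * F s x k I) t
      = ∑ k, (deriv (fun s => dLv s x k) t * F t x k I
          + dLv t x k * deriv (fun s => F s x k I) t) := by
    rw [deriv_fun_sum (fun k _ =>
      ((hdLv_s x k).differentiable (by simp) t).fun_mul ((hF_s x k I).differentiable (by simp) t))]
    exact Finset.sum_congr rfl fun k _ => deriv_fun_mul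
      ((hdLv_s x k).differentiable (by simp) t) ((hF_s x k I).differentiable (by simp) t)
  -- chain rule expansion of the spatial derivative of Ldens
  have hφsl : ContDiff ℝ (⊤ : ℕ∞) (fun y => φ t y) := cfb_sliceX _ hφ t
  have hVsl : ContDiff ℝ (⊤ : ℕ∞) (fun y => V t y) := cfb_sliceX _ hVc t
  have hFsl : ContDiff ℝ (⊤ : ℕ∞) (fun y => F t y) := cfb_sliceX _ hFc t
  have hH : HasFDerivAt (fun y => ((y, φ t y, V t y, F t y) :
      (Fin 3 → ℝ) × (Fin 3 → ℝ) × (Fin 3 → ℝ) × (Fin 3 → Fin 3 → ℝ)))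
      ((ContinuousLinearMap.id ℝ (Fin 3 → ℝ)).prod
        ((fderiv ℝ (fun y => φ t y) x).prod
          ((fderiv ℝ (fun y => V t y) x).prod (fderiv ℝ (fun y => F t y) x)))) x :=
    (hasFDerivAt_id x).prodMk ((hφsl.differentiable (by simp) x).hasFDerivAt.prodMk
      (((hVsl.differentiable (by simp) x).hasFDerivAt).prodMk
        ((hFsl.differentiable (by simp) x).hasFDerivAt)))
  have hcomp := ((hLd (x, φ t x, V t x, F t x)).hasFDerivAt.comp x hH).fderiv
  have hP : ∀ J, fderiv ℝ (fun y => Ldens t y) x (Pi.single J 1)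
      = dLx t x J + (∑ k, F t x k J * dLφ t x k)
        + (∑ k, fderiv ℝ (fun y => V t y k) x (Pi.single J 1) * dLv t x k)
        + (∑ k, ∑ M, fderiv ℝ (fun y => F t y k M) x (Pi.single J 1) * dLF t x k M) := by
    intro J
    have hφk : ∀ k, fderiv ℝ (fun y => φ t y) x (Pi.single J 1) k = F t x k J := by
      intro k
      rw [← cfb_fderiv_proj (fun y => φ t y) x (hφsl.differentiable (by simp) x) k]
      exact (hF t x k J).symm
    have hVk : ∀ k, fderiv ℝ (fun y => V t y) x (Pi.single J 1) k
        = fderiv ℝ (fun y => V t y k) x (Pi.single J 1) :=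
      fun k => (cfb_fderiv_proj (fun y => V t y) x (hVsl.differentiable (by simp) x) k _).symm
    have hFkM : ∀ k M, fderiv ℝ (fun y => F t y) x (Pi.single J 1) k M
        = fderiv ℝ (fun y => F t y k M) x (Pi.single J 1) := by
      intro k M
      rw [← cfb_fderiv_proj (fun y => F t y) x (hFsl.differentiable (by simp) x) k]
      exact (cfb_fderiv_proj (fun y => F t y k) x
        ((contDiff_pi.1 hFsl k).differentiable (by simp) x) M _).symm
    have h0 : (fun y => Ldens t y)
        = (fun q : (Fin 3 → ℝ) × (Fin 3 → ℝ) × (Fin 3 → ℝ) × (Fin 3 → Fin 3 → ℝ) =>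
            L₀ q.1 q.2.1 q.2.2.1 q.2.2.2) ∘ (fun y => (y, φ t y, V t y, F t y)) :=
      funext fun y => hLdens t y
    rw [h0, hcomp, ContinuousLinearMap.comp_apply, cfb_clm_decomp]
    simp only [ContinuousLinearMap.prod_apply, ContinuousLinearMap.coe_id', id_eq]
    simp only [← hdLx' t x, ← hdLφ' t x, ← hdLv' t x, ← hdLF' t x, hφk, hVk, hFkM]
    congr 1
    congr 1
    congr 1
    simp [Pi.single_apply]
  -- symmetry of second spatial derivatives
  have hsym : ∀ k M J, fderiv ℝ (fun y => F t y k M) x (Pi.single J 1)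
      = fderiv ℝ (fun y => F t y k J) x (Pi.single M 1) := by
    intro k M J
    have hgk : ContDiff ℝ (⊤ : ℕ∞) (fun y => φ t y k) := contDiff_pi.1 hφsl k
    have hFe : ∀ N : Fin 3, (fun y => F t y k N)
        = fun y => fderiv ℝ (fun y' => φ t y' k) y (Pi.single N 1) :=
      fun N => funext fun y => hF t y k N
    rw [hFe M, hFe J]
    exact cfb_second_symm _ hgk x _ _
  -- mixed time-space symmetry
  have hmix : ∀ k, deriv (fun s => F s x k I) t
      = fderiv ℝ (fun y => V t y k) x (Pi.single I 1) := by
    intro k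
    have hΨ : ContDiff ℝ (⊤ : ℕ∞) (fun p : ℝ × (Fin 3 → ℝ) => φ p.1 p.2 k) := contDiff_pi.1 hφ k
    have hΨ' : ContDiff ℝ (⊤ : ℕ∞) (fderiv ℝ (fun p : ℝ × (Fin 3 → ℝ) => φ p.1 p.2 k)) :=
      hΨ.fderiv_right (by simp)
    have step1 : ∀ s y, F s y k I = fderiv ℝ (fun p : ℝ × (Fin 3 → ℝ) => φ p.1 p.2 k)
        (s, y) ((0 : ℝ), Pi.single I 1) := by
      intro s y
      rw [hF s y k I]
      exact cfb_fderiv_sliceX (fun p : ℝ × (Fin 3 → ℝ) => φ p.1 p.2 k) s y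
        ((hΨ.differentiable (by simp)) _) _
    have step2 : ∀ y, V t y k = fderiv ℝ (fun p : ℝ × (Fin 3 → ℝ) => φ p.1 p.2 k)
        (t, y) (1, 0) := by
      intro y
      rw [show V t y k = fderiv ℝ (fun p : ℝ × (Fin 3 → ℝ) => φ p.1 p.2) (t, y) (1, 0) k
        from by rw [hVfd t y]]
      exact (cfb_fderiv_proj (fun p : ℝ × (Fin 3 → ℝ) => φ p.1 p.2) (t, y) (hφd _) k _).symm
    calc deriv (fun s => F s x k I) t
        = deriv (fun s => fderiv ℝ (fun p : ℝ × (Fin 3 → ℝ) => φ p.1 p.2 k) (s, x)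
            ((0 : ℝ), Pi.single I 1)) t := by simp only [step1]
      _ = fderiv ℝ (fun p => fderiv ℝ (fun p : ℝ × (Fin 3 → ℝ) => φ p.1 p.2 k) p
            ((0 : ℝ), Pi.single I 1)) (t, x) (1, 0) :=
          cfb_deriv_sliceT _ t x (((hΨ'.clm_apply contDiff_const).differentiable (by simp)) _)
      _ = fderiv ℝ (fun p => fderiv ℝ (fun p : ℝ × (Fin 3 → ℝ) => φ p.1 p.2 k) p
            ((1 : ℝ), (0 : Fin 3 → ℝ))) (t, x) ((0 : ℝ), Pi.single I 1) :=
          cfb_second_symm _ hΨ (t, x) _ _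
      _ = fderiv ℝ (fun y => fderiv ℝ (fun p : ℝ × (Fin 3 → ℝ) => φ p.1 p.2 k) (t, y)
            ((1 : ℝ), (0 : Fin 3 → ℝ))) x (Pi.single I 1) :=
          (cfb_fderiv_sliceX _ t x
            (((hΨ'.clm_apply contDiff_const).differentiable (by simp)) _) _).symm
      _ = fderiv ℝ (fun y => V t y k) x (Pi.single I 1) := by simp only [← step2]
  -- Euler-Lagrange rearranged
  have hELk : ∀ k, dLφ t x k
      = (∑ J, fderiv ℝ (fun y => dLF t y k J) x (Pi.single J 1))
        + deriv (fun s => dLv s x k) t := by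
    intro k
    have h := hEL t x hx k
    linarith
  -- final assembly
  simp only [hdiv, hP, htime, hmix]
  exact cfb_algebra I (dLx t x) (F t x) (dLF t x)
    (fun k J => fderiv ℝ (fun y => dLF t y k J) x (Pi.single J 1))
    (fun k J => fderiv ℝ (fun y => V t y k) x (Pi.single J 1))
    (dLφ t x) (dLv t x) (fun k => deriv (fun s => dLv s x k) t)
    (fun k M J => fderiv ℝ (fun y => F t y k M) x (Pi.single J 1))
    hsym hELk
end

section
/- For a smooth map ψ : ℝ^d → ℝ^r with surjective differential at every point (a submersion) and a smooth Lagrangian density L(x, ψ, Dψ), the divergence identity D_ν 𝕋_μ{}^ν = −∂L/∂x^μ for all μ implies that ψ satisfies the Euler–Lagrange equations ∂L/∂ψ^I − D_ν(∂L/∂(∂_ν ψ^I)) = 0 for all I. Hence for submersions the Euler–Lagrange equations and the Noether stress–energy conservation law (with source −∂L/∂x) are equivalent. -/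
open scoped BigOperators

lemma NSE.pi_clm {n : ℕ} {E : Type*} [NormedAddCommGroup E] [NormedSpace ℝ E]
    (φ : (Fin n → ℝ) →L[ℝ] E) (v : Fin n → ℝ) :
    φ v = ∑ i, v i • φ (Pi.single i 1) := by
  have h := (φ : (Fin n → ℝ) →ₗ[ℝ] E).pi_apply_eq_sum_univ v
  have h2 : ∀ i : Fin n, (fun j => if i = j then (1:ℝ) else 0) = Pi.single i 1 := by
    intro i; funext j
    by_cases hij : i = j <;> simp [Pi.single_apply, hij, eq_comm]
  simp only [h2] at h
  exact h

lemma NSE.single_decomp {n m : ℕ} (c : Fin n → Fin m → ℝ) (i : Fin n) :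
    Pi.single i (c i) = ∑ ν, c i ν • (Pi.single i (Pi.single ν 1) : Fin n → Fin m → ℝ) := by
  have h : c i = ∑ ν, c i ν • (Pi.single ν 1 : Fin m → ℝ) :=
    NSE.pi_clm (ContinuousLinearMap.id ℝ (Fin m → ℝ)) (c i)
  calc Pi.single i (c i) = (LinearMap.single ℝ _ i) (c i) := rfl
    _ = ∑ ν, c i ν • (Pi.single i (Pi.single ν 1) : Fin n → Fin m → ℝ) := by
        conv_lhs => rw [h, map_sum]
        exact Finset.sum_congr rfl fun ν _ => by rw [map_smul]; rfl

lemma NSE.pi2_clm {n m : ℕ} (φ : (Fin n → Fin m → ℝ) →L[ℝ] ℝ) (c : Fin n → Fin m → ℝ) :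
    φ c = ∑ i, ∑ ν, c i ν • φ (Pi.single i (Pi.single ν 1)) := by
  conv_lhs => rw [← Finset.univ_sum_single c, map_sum]
  refine Finset.sum_congr rfl fun i _ => ?_
  rw [NSE.single_decomp c i, map_sum]
  exact Finset.sum_congr rfl fun ν _ => by rw [map_smul]

section partials
variable {A B C G : Type*} [NormedAddCommGroup A] [NormedSpace ℝ A]
  [NormedAddCommGroup B] [NormedSpace ℝ B] [NormedAddCommGroup C] [NormedSpace ℝ C]
  [NormedAddCommGroup G] [NormedSpace ℝ G]

lemma NSE.fderiv_partial1 {F : A × B × C → G} {a : A} {b : B} {c : C}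
    (hF : DifferentiableAt ℝ F (a, b, c)) (v : A) :
    fderiv ℝ (fun z => F (z, b, c)) a v = fderiv ℝ F (a, b, c) (v, 0, 0) := by
  have hι : HasFDerivAt (fun z : A => (z, b, c))
      ((ContinuousLinearMap.id ℝ A).prod 0) a :=
    HasFDerivAt.prodMk (hasFDerivAt_id _) (hasFDerivAt_const _ _)
  have h := (hF.hasFDerivAt.comp a hι).fderiv
  rw [show (fun z => F (z, b, c)) = F ∘ (fun z => (z, b, c)) from rfl, h]; rfl

lemma NSE.fderiv_partial2 {F : A × B × C → G} {a : A} {b : B} {c : C}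
    (hF : DifferentiableAt ℝ F (a, b, c)) (v : B) :
    fderiv ℝ (fun z => F (a, z, c)) b v = fderiv ℝ F (a, b, c) (0, v, 0) := by
  have hι : HasFDerivAt (fun z : B => (a, z, c))
      ((0 : B →L[ℝ] A).prod ((ContinuousLinearMap.id ℝ B).prod 0)) b :=
    HasFDerivAt.prodMk (hasFDerivAt_const _ _) (HasFDerivAt.prodMk (hasFDerivAt_id _) (hasFDerivAt_const _ _))
  have h := (hF.hasFDerivAt.comp b hι).fderiv
  rw [show (fun z => F (a, z, c)) = F ∘ (fun z => (a, z, c)) from rfl, h]; rfl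

lemma NSE.fderiv_partial3 {F : A × B × C → G} {a : A} {b : B} {c : C}
    (hF : DifferentiableAt ℝ F (a, b, c)) (v : C) :
    fderiv ℝ (fun z => F (a, b, z)) c v = fderiv ℝ F (a, b, c) (0, 0, v) := by
  have hι : HasFDerivAt (fun z : C => (a, b, z))
      ((0 : C →L[ℝ] A).prod ((0 : C →L[ℝ] B).prod (ContinuousLinearMap.id ℝ C))) c :=
    HasFDerivAt.prodMk (hasFDerivAt_const _ _) (HasFDerivAt.prodMk (hasFDerivAt_const _ _) (hasFDerivAt_id _))
  have h := (hF.hasFDerivAt.comp c hι).fderiv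
  rw [show (fun z => F (a, b, z)) = F ∘ (fun z => (a, b, z)) from rfl, h]; rfl

end partials

/-- if `ψ` is a submersion, then the Euler–Lagrange equations are
equivalent to the Noether stress–energy conservation law `D_ν 𝕋_μ{}^ν = −∂L/∂x^μ`. -/
theorem noether_conservation_iff_euler_lagrange_of_submersion (d r : ℕ)
    (L : (Fin d → ℝ) → (Fin r → ℝ) → (Fin r → Fin d → ℝ) → ℝ)
    (ψ : (Fin d → ℝ) → (Fin r → ℝ))
    (hL : ContDiff ℝ (⊤ : ℕ∞) (fun p : (Fin d → ℝ) × (Fin r → ℝ) × (Fin r → Fin d → ℝ) =>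
      L p.1 p.2.1 p.2.2))
    (hψ : ContDiff ℝ (⊤ : ℕ∞) ψ)
    -- ψ is a submersion: its differential is surjective at every point
    (hsub : ∀ x, Function.Surjective ⇑(fderiv ℝ ψ x))
    -- jet of ψ
    (Dψ : (Fin d → ℝ) → Fin r → Fin d → ℝ)
    (hDψ : ∀ x i ν, Dψ x i ν = fderiv ℝ (fun y => ψ y i) x (Pi.single ν 1))
    -- partial derivatives of L along the jet of ψ
    (dLψ : (Fin d → ℝ) → Fin r → ℝ)
    (hdLψ : ∀ x i, dLψ x i = fderiv ℝ (fun z => L x z (Dψ x)) (ψ x) (Pi.single i 1))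
    (dLP : (Fin d → ℝ) → Fin r → Fin d → ℝ)
    (hdLP : ∀ x i ν, dLP x i ν =
      fderiv ℝ (fun P => L x (ψ x) P) (Dψ x) (Pi.single i (Pi.single ν 1)))
    -- Noether stress–energy tensor
    (T : (Fin d → ℝ) → Fin d → Fin d → ℝ)
    (hT : ∀ x μ ν, T x μ ν =
      (∑ i, Dψ x i μ * dLP x i ν) - (if μ = ν then L x (ψ x) (Dψ x) else 0)) :
    (∀ x i, dLψ x i - ∑ ν, fderiv ℝ (fun y => dLP y i ν) x (Pi.single ν 1) = 0)
      ↔ (∀ x μ, ∑ ν, fderiv ℝ (fun y => T y μ ν) x (Pi.single ν 1)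
          = - fderiv ℝ (fun z => L z (ψ x) (Dψ x)) x (Pi.single μ 1)) := by
  classical
  set F : (Fin d → ℝ) × (Fin r → ℝ) × (Fin r → Fin d → ℝ) → ℝ :=
    fun p => L p.1 p.2.1 p.2.2 with hF_def
  have hF : ContDiff ℝ (⊤ : ℕ∞) F := hL
  have hFd : ∀ p, DifferentiableAt ℝ F p := fun p => (hF.differentiable (by simp)) p
  have hDψ_smooth : ContDiff ℝ (⊤ : ℕ∞) Dψ := by
    have hDψ_eq : Dψ = fun x i ν => fderiv ℝ (fun y => ψ y i) x (Pi.single ν 1) := by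
      funext x i ν; exact hDψ x i ν
    rw [hDψ_eq]
    refine contDiff_pi.2 fun i => contDiff_pi.2 fun ν => ?_
    exact ((contDiff_pi.1 hψ i).fderiv_right (by simp)).clm_apply contDiff_const
  set J : (Fin d → ℝ) → (Fin d → ℝ) × (Fin r → ℝ) × (Fin r → Fin d → ℝ) :=
    fun x => (x, ψ x, Dψ x) with hJ_def
  have hJ : ContDiff ℝ (⊤ : ℕ∞) J := contDiff_id.prodMk (hψ.prodMk hDψ_smooth)
  have hψd : ∀ x, DifferentiableAt ℝ ψ x := fun x => (hψ.differentiable (by simp)) x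
  have hDψd : ∀ x, DifferentiableAt ℝ Dψ x := fun x => (hDψ_smooth.differentiable (by simp)) x
  -- components of ψ
  have hψc : ∀ (i : Fin r) x (v : Fin d → ℝ),
      fderiv ℝ (fun y => ψ y i) x v = fderiv ℝ ψ x v i := by
    intro i x v
    have h := ((ContinuousLinearMap.proj (R := ℝ) (φ := fun _ : Fin r => ℝ)
      i).hasFDerivAt.comp x (hψd x).hasFDerivAt).fderiv
    rw [show (fun y => ψ y i)
      = (ContinuousLinearMap.proj (R := ℝ) (φ := fun _ : Fin r => ℝ) i) ∘ ψ from rfl, h]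
    rfl
  -- components of Dψ
  have hDψc : ∀ (i : Fin r) (ν : Fin d) x (v : Fin d → ℝ),
      fderiv ℝ (fun y => Dψ y i ν) x v = fderiv ℝ Dψ x v i ν := by
    intro i ν x v
    have h := (((ContinuousLinearMap.proj (R := ℝ) (φ := fun _ : Fin d => ℝ) ν).comp
      (ContinuousLinearMap.proj (R := ℝ) (φ := fun _ : Fin r => Fin d → ℝ)
        i)).hasFDerivAt.comp x (hDψd x).hasFDerivAt).fderiv
    rw [show (fun y => Dψ y i ν)
      = ((ContinuousLinearMap.proj (R := ℝ) (φ := fun _ : Fin d => ℝ) ν).comp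
        (ContinuousLinearMap.proj (R := ℝ) (φ := fun _ : Fin r => Fin d → ℝ) i)) ∘ Dψ
      from rfl, h]
    rfl
  -- chain rule
  have hchain : ∀ x (v : Fin d → ℝ), fderiv ℝ (fun y => L y (ψ y) (Dψ y)) x v
      = fderiv ℝ F (J x) (v, fderiv ℝ ψ x v, fderiv ℝ Dψ x v) := by
    intro x v
    have hJ' : HasFDerivAt J ((ContinuousLinearMap.id ℝ _).prod
        ((fderiv ℝ ψ x).prod (fderiv ℝ Dψ x))) x :=
      HasFDerivAt.prodMk (hasFDerivAt_id x) ((hψd x).hasFDerivAt.prodMk (hDψd x).hasFDerivAt)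
    have h := ((hFd (J x)).hasFDerivAt.comp x hJ').fderiv
    rw [show (fun y => L y (ψ y) (Dψ y)) = F ∘ J from rfl, h]
    rfl
  -- identification of partials
  have hdLψ' : ∀ x i, dLψ x i = fderiv ℝ F (J x) (0, Pi.single i 1, 0) := by
    intro x i
    rw [hdLψ x i]
    exact NSE.fderiv_partial2 (F := F) (hFd (x, ψ x, Dψ x)) _
  have hdLP' : ∀ x i ν, dLP x i ν
      = fderiv ℝ F (J x) (0, 0, Pi.single i (Pi.single ν 1)) := by
    intro x i ν
    rw [hdLP x i ν]
    exact NSE.fderiv_partial3 (F := F) (hFd (x, ψ x, Dψ x)) _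
  have hpartx : ∀ x μ, fderiv ℝ (fun z => L z (ψ x) (Dψ x)) x (Pi.single μ 1)
      = fderiv ℝ F (J x) (Pi.single μ 1, 0, 0) := by
    intro x μ
    exact NSE.fderiv_partial1 (F := F) (hFd (x, ψ x, Dψ x)) _
  -- decomposition of the total derivative of F
  have hdecomp : ∀ (p) (a : Fin d → ℝ) (b : Fin r → ℝ) (c : Fin r → Fin d → ℝ),
      fderiv ℝ F p (a, b, c) = fderiv ℝ F p (a, 0, 0)
        + (∑ i, b i * fderiv ℝ F p (0, Pi.single i 1, 0))
        + ∑ i, ∑ ν, c i ν * fderiv ℝ F p (0, 0, Pi.single i (Pi.single ν 1)) := by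
    intro p a b c
    have h1 : ((a, b, c) : (Fin d → ℝ) × (Fin r → ℝ) × (Fin r → Fin d → ℝ))
        = (a, 0, 0) + ((0, b, 0) + (0, 0, c)) := by
      simp [Prod.ext_iff]
    have h2 : fderiv ℝ F p ((0 : Fin d → ℝ), b, (0 : Fin r → Fin d → ℝ))
        = ∑ i, b i * fderiv ℝ F p (0, Pi.single i 1, 0) := by
      have h := NSE.pi_clm ((fderiv ℝ F p).comp
        (((0 : (Fin r → ℝ) →L[ℝ] (Fin d → ℝ))).prod
          ((ContinuousLinearMap.id ℝ (Fin r → ℝ)).prod 0))) b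
      simpa [ContinuousLinearMap.comp_apply, ContinuousLinearMap.prod_apply,
        smul_eq_mul] using h
    have h3 : fderiv ℝ F p ((0 : Fin d → ℝ), (0 : Fin r → ℝ), c)
        = ∑ i, ∑ ν, c i ν * fderiv ℝ F p (0, 0, Pi.single i (Pi.single ν 1)) := by
      have h := NSE.pi2_clm ((fderiv ℝ F p).comp
        (((0 : (Fin r → Fin d → ℝ) →L[ℝ] (Fin d → ℝ))).prod
          (((0 : (Fin r → Fin d → ℝ) →L[ℝ] (Fin r → ℝ))).prod
            (ContinuousLinearMap.id ℝ (Fin r → Fin d → ℝ))))) c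
      simpa [ContinuousLinearMap.comp_apply, ContinuousLinearMap.prod_apply,
        smul_eq_mul] using h
    rw [h1, map_add, map_add, h2, h3, add_assoc]
  -- smoothness of the momenta dLP
  have hdLPs : ∀ (i : Fin r) (ν : Fin d), ContDiff ℝ (⊤ : ℕ∞) (fun y => dLP y i ν) := by
    intro i ν
    have heq : (fun y => dLP y i ν)
        = fun y => fderiv ℝ F (J y) (0, 0, Pi.single i (Pi.single ν 1)) := by
      funext y; exact hdLP' y i ν
    rw [heq]
    exact ((hF.fderiv_right (by simp)).comp hJ).clm_apply contDiff_const
  -- symmetry of second derivatives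
  have hsym : ∀ x (i : Fin r) (μ ν : Fin d),
      fderiv ℝ (fun y => Dψ y i μ) x (Pi.single ν 1)
        = fderiv ℝ (fun y => Dψ y i ν) x (Pi.single μ 1) := by
    intro x i μ ν
    have hψi : ContDiff ℝ (⊤ : ℕ∞) (fun y => ψ y i) := contDiff_pi.1 hψ i
    have hd1 : ∀ y, DifferentiableAt ℝ (fun y => ψ y i) y :=
      fun y => (hψi.differentiable (by simp)) y
    have hd2 : DifferentiableAt ℝ (fderiv ℝ (fun y => ψ y i)) x :=
      ((hψi.fderiv_right (m := 1) (WithTop.coe_le_coe.2 le_top)).differentiable (by simp)) x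
    have hsymm := second_derivative_symmetric (f := fun y => ψ y i)
      (f' := fderiv ℝ (fun y => ψ y i)) (fun y => (hd1 y).hasFDerivAt) hd2.hasFDerivAt
    have hkey : ∀ (w v : Fin d → ℝ),
        fderiv ℝ (fun y => fderiv ℝ (fun y' => ψ y' i) y w) x v
          = fderiv ℝ (fderiv ℝ (fun y' => ψ y' i)) x v w := by
      intro w v
      rw [fderiv_clm_apply hd2 (differentiableAt_const w)]
      simp
    have hfun : ∀ κ : Fin d,
        (fun y => Dψ y i κ) = fun y => fderiv ℝ (fun y' => ψ y' i) y (Pi.single κ 1) := by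
      intro κ; funext y; exact hDψ y i κ
    rw [hfun μ, hfun ν, hkey, hkey, hsymm]
  -- THE KEY IDENTITY
  have key : ∀ x μ, ∑ ν, fderiv ℝ (fun y => T y μ ν) x (Pi.single ν 1)
      = - fderiv ℝ (fun z => L z (ψ x) (Dψ x)) x (Pi.single μ 1)
        - ∑ i, Dψ x i μ
            * (dLψ x i - ∑ ν, fderiv ℝ (fun y => dLP y i ν) x (Pi.single ν 1)) := by
    intro x μ
    have hDd : ∀ (i : Fin r) (κ : Fin d), DifferentiableAt ℝ (fun y => Dψ y i κ) x :=
      fun i κ => ((contDiff_pi.1 (contDiff_pi.1 hDψ_smooth i) κ).differentiable (by simp)) x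
    have hPd : ∀ (i : Fin r) (κ : Fin d), DifferentiableAt ℝ (fun y => dLP y i κ) x :=
      fun i κ => ((hdLPs i κ).differentiable (by simp)) x
    have hLcd : DifferentiableAt ℝ (fun y => L y (ψ y) (Dψ y)) x :=
      ((hF.comp hJ).differentiable (by simp)) x
    have step1 : ∀ ν, fderiv ℝ (fun y => T y μ ν) x (Pi.single ν 1)
        = (∑ i, (fderiv ℝ (fun y => Dψ y i μ) x (Pi.single ν 1) * dLP x i ν
            + Dψ x i μ * fderiv ℝ (fun y => dLP y i ν) x (Pi.single ν 1)))
          - (if μ = ν then fderiv ℝ (fun y => L y (ψ y) (Dψ y)) x (Pi.single ν 1)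
              else 0) := by
      intro ν
      have hsumd : DifferentiableAt ℝ (fun y => ∑ i, Dψ y i μ * dLP y i ν) x :=
        DifferentiableAt.fun_sum fun i _ => (hDd i μ).mul (hPd i ν)
      have hsum_fderiv : fderiv ℝ (fun y => ∑ i, Dψ y i μ * dLP y i ν) x (Pi.single ν 1)
          = ∑ i, (fderiv ℝ (fun y => Dψ y i μ) x (Pi.single ν 1) * dLP x i ν
              + Dψ x i μ * fderiv ℝ (fun y => dLP y i ν) x (Pi.single ν 1)) := by
        rw [fderiv_fun_sum (A := fun i y => Dψ y i μ * dLP y i ν) (fun i _ => (hDd i μ).mul (hPd i ν)),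
          ContinuousLinearMap.sum_apply]
        refine Finset.sum_congr rfl fun i _ => ?_
        rw [fderiv_fun_mul (hDd i μ) (hPd i ν)]
        simp only [ContinuousLinearMap.add_apply, ContinuousLinearMap.smul_apply,
          smul_eq_mul]
        ring
      rcases eq_or_ne μ ν with h | h
      · have hTfun : (fun y => T y μ ν)
            = fun y => (∑ i, Dψ y i μ * dLP y i ν) - L y (ψ y) (Dψ y) := by
          funext y; rw [hT y μ ν, if_pos h]
        rw [hTfun, fderiv_fun_sub hsumd hLcd, ContinuousLinearMap.sub_apply,
          hsum_fderiv, if_pos h]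
      · have hTfun : (fun y => T y μ ν) = fun y => (∑ i, Dψ y i μ * dLP y i ν) := by
          funext y; rw [hT y μ ν, if_neg h, sub_zero]
        rw [hTfun, hsum_fderiv, if_neg h, sub_zero]
    have hLc_expand : fderiv ℝ (fun y => L y (ψ y) (Dψ y)) x (Pi.single μ 1)
        = fderiv ℝ F (J x) (Pi.single μ 1, 0, 0)
          + (∑ i, Dψ x i μ * dLψ x i)
          + ∑ i, ∑ ν, fderiv ℝ (fun y => Dψ y i ν) x (Pi.single μ 1) * dLP x i ν := by
      rw [hchain x (Pi.single μ 1), hdecomp]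
      congr 1
      · congr 1
        refine Finset.sum_congr rfl fun i _ => ?_
        rw [hdLψ' x i, hDψ x i μ, hψc i x]
      · refine Finset.sum_congr rfl fun i _ => Finset.sum_congr rfl fun ν _ => ?_
        rw [hdLP' x i ν, hDψc i ν x]
    have hsum_split : ∑ ν, ∑ i,
        (fderiv ℝ (fun y => Dψ y i μ) x (Pi.single ν 1) * dLP x i ν
          + Dψ x i μ * fderiv ℝ (fun y => dLP y i ν) x (Pi.single ν 1))
        = (∑ i, ∑ ν, fderiv ℝ (fun y => Dψ y i ν) x (Pi.single μ 1) * dLP x i ν)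
          + ∑ i, Dψ x i μ * ∑ ν, fderiv ℝ (fun y => dLP y i ν) x (Pi.single ν 1) := by
      rw [Finset.sum_comm]
      calc ∑ i, ∑ ν,
          (fderiv ℝ (fun y => Dψ y i μ) x (Pi.single ν 1) * dLP x i ν
            + Dψ x i μ * fderiv ℝ (fun y => dLP y i ν) x (Pi.single ν 1))
          = ∑ i, ((∑ ν, fderiv ℝ (fun y => Dψ y i ν) x (Pi.single μ 1) * dLP x i ν)
            + Dψ x i μ * ∑ ν, fderiv ℝ (fun y => dLP y i ν) x (Pi.single ν 1)) := by
            refine Finset.sum_congr rfl fun i _ => ?_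
            rw [Finset.sum_add_distrib, Finset.mul_sum]
            congr 1
            exact Finset.sum_congr rfl fun ν _ => by rw [hsym x i μ ν]
        _ = _ := Finset.sum_add_distrib
    have hmul_sub : ∑ i, Dψ x i μ
        * (dLψ x i - ∑ ν, fderiv ℝ (fun y => dLP y i ν) x (Pi.single ν 1))
        = (∑ i, Dψ x i μ * dLψ x i)
          - ∑ i, Dψ x i μ * ∑ ν, fderiv ℝ (fun y => dLP y i ν) x (Pi.single ν 1) := by
      rw [← Finset.sum_sub_distrib]
      exact Finset.sum_congr rfl fun i _ => mul_sub _ _ _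
    simp only [step1]
    rw [Finset.sum_sub_distrib, hsum_split]
    have hif : ∑ ν, (if μ = ν then
        fderiv ℝ (fun y => L y (ψ y) (Dψ y)) x (Pi.single ν 1) else 0)
        = fderiv ℝ (fun y => L y (ψ y) (Dψ y)) x (Pi.single μ 1) := by
      simp
    rw [hif, hLc_expand, hpartx x μ, hmul_sub]
    ring
  -- conclude
  constructor
  · intro hEL x μ
    rw [key x μ, Finset.sum_eq_zero fun i _ => by rw [hEL x i, mul_zero], sub_zero]
  · intro hcons x i
    have hz : ∀ μ, ∑ j, Dψ x j μ
        * (dLψ x j - ∑ ν, fderiv ℝ (fun y => dLP y j ν) x (Pi.single ν 1)) = 0 := by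
      intro μ
      have h1 := key x μ
      rw [hcons x μ] at h1
      linarith
    set Evec : Fin r → ℝ :=
      fun j => dLψ x j - ∑ ν, fderiv ℝ (fun y => dLP y j ν) x (Pi.single ν 1)
      with hE_def
    obtain ⟨v, hv⟩ := hsub x Evec
    have hv' : ∀ j, (fderiv ℝ ψ x v) j = ∑ μ, v μ * Dψ x j μ := by
      intro j
      rw [← hψc j x v, NSE.pi_clm (fderiv ℝ (fun y => ψ y j) x) v]
      exact Finset.sum_congr rfl fun μ _ => by rw [smul_eq_mul, hDψ x j μ]
    have h2 : ∑ j, (fderiv ℝ ψ x v) j * Evec j = 0 := by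
      calc ∑ j, (fderiv ℝ ψ x v) j * Evec j
          = ∑ j, ∑ μ, v μ * Dψ x j μ * Evec j := by
            refine Finset.sum_congr rfl fun j _ => ?_
            rw [hv' j, Finset.sum_mul]
        _ = ∑ μ, v μ * ∑ j, Dψ x j μ * Evec j := by
            rw [Finset.sum_comm]
            refine Finset.sum_congr rfl fun μ _ => ?_
            rw [Finset.mul_sum]
            exact Finset.sum_congr rfl fun j _ => by ring
        _ = 0 := Finset.sum_eq_zero fun μ _ => by rw [hz μ, mul_zero]
    rw [hv] at h2
    have h4 := (Finset.sum_eq_zero_iff_of_nonneg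
      (fun j _ => mul_self_nonneg (Evec j))).1 h2 i (Finset.mem_univ i)
    exact mul_self_eq_zero.1 h4
end

section
/- Let L be a smooth Lagrangian density on the target and define the pulled-back density L₀(m₀) := J_Φ(m₀) · L̃(Φ(m₀), TΨ̃(Φ(m₀))), where Ψ̃ ∘ Φ = π is a fixed projection, Φ a diffeomorphism, and J_Φ = det TΦ. Then the partial derivative of L₀ with respect to the Jacobian variable TΦ satisfies ∂L₀/∂TΦ = −J_Φ (TΦ)^{-⋆}(Tπ)^⋆ (∂L̃/∂TΨ̃ ∘ Φ)(TΦ)^{-⋆} + L₀ (TΦ)^{-⋆}, and consequently the Noether tensor of Φ, 𝔹 := (TΦ)^⋆ (∂L₀/∂TΦ) − L₀ I⋆, equals −J_Φ (TΦ)^⋆ (𝕋^N_{Ψ̃} ∘ Φ)(TΦ)^{-⋆} − L₀ I⋆, where 𝕋^N_{Ψ̃} = (TΨ̃)^⋆ (∂L̃/∂TΨ̃) − L̃ I⋆ is the Noether tensor of Ψ̃. -/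
/-!
By Jacobi's formula `∂ det / ∂A = adj(A)ᵀ = det A · A⁻ᵀ` and the derivative `H ↦ -A⁻¹ H A⁻¹` of
inversion, the product and chain rules give the partial derivatives of `L₀(A) = det A · ℓ(Tπ A⁻¹)`.
In the direction of the elementary matrix `E_ab`, the chain rule feeds `ℓ` the rank-one matrix
`-(Tπ A⁻¹) E_ab A⁻¹`, and a linear functional with matrix of partials `G` takes the value
`(Xᵀ G Yᵀ)_ab` at `X E_ab Y`. The Noether tensor identity is then matrix algebra, using
`(Tπ A⁻¹)ᵀ = A⁻ᵀ Tπᵀ` and `Aᵀ A⁻ᵀ = 1`.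
-/

open Matrix

namespace Matrix

section Calculus

variable {𝕜 : Type*} [NontriviallyNormedField 𝕜]

variable (𝕜) in
noncomputable def detRowContinuousMultilinear (n : Type*) [Fintype n] [DecidableEq n] :
    ContinuousMultilinearMap 𝕜 (fun _ : n => n → 𝕜) 𝕜 :=
  ⟨(detRowAlternating : (n → 𝕜) [⋀^n]→ₗ[𝕜] 𝕜).toMultilinearMap, continuous_id.matrix_det⟩

theorem hasFDerivAt_det {n : Type*} [Fintype n] [DecidableEq n] (A : n → n → 𝕜) :
    HasFDerivAt (fun M : n → n → 𝕜 => (of M).det)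
      ((detRowContinuousMultilinear 𝕜 n).linearDeriv A) A :=
  (detRowContinuousMultilinear 𝕜 n).hasFDerivAt A

theorem linearDeriv_detRowContinuousMultilinear_single {n : Type*} [Fintype n] [DecidableEq n]
    (A : n → n → 𝕜) (a b : n) :
    (detRowContinuousMultilinear 𝕜 n).linearDeriv A (Pi.single a (Pi.single b 1)) =
      adjugate (of A) b a := by
  rw [ContinuousMultilinearMap.linearDeriv_apply, Finset.sum_eq_single a]
  · rw [adjugate_apply, Pi.single_eq_same]
    rfl
  · intro i _ hi
    rw [Pi.single_eq_of_ne hi]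
    exact det_eq_zero_of_row_eq_zero i fun j => by simp
  · simp

variable [CompleteSpace 𝕜]

noncomputable def mulLeftCLM {l m : Type*} (n : Type*) [Fintype m] [Fintype n]
    (X : Matrix l m 𝕜) : (m → n → 𝕜) →L[𝕜] (l → n → 𝕜) :=
  LinearMap.toContinuousLinearMap (mulLeftLinearMap n 𝕜 X)

noncomputable def mulRightCLM (l : Type*) {m n : Type*} [Fintype l] [Fintype m]
    (Y : Matrix m n 𝕜) : (l → m → 𝕜) →L[𝕜] (l → n → 𝕜) :=
  LinearMap.toContinuousLinearMap (mulRightLinearMap l 𝕜 Y)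

@[simp]
theorem mulLeftCLM_apply {l m n : Type*} [Fintype m] [Fintype n] (X : Matrix l m 𝕜)
    (H : m → n → 𝕜) : mulLeftCLM n X H = of.symm (X * of H) :=
  rfl

@[simp]
theorem mulRightCLM_apply {l m n : Type*} [Fintype l] [Fintype m] (Y : Matrix m n 𝕜)
    (H : l → m → 𝕜) : mulRightCLM l Y H = of.symm (of H * Y) :=
  rfl

open scoped Matrix.Norms.Operator in
/-- The operator norm on matrices only serves to invoke `hasFDerivAt_ringInverse`; the result is
transported back to the entrywise sup norm along `Matrix.of`. -/
theorem hasFDerivAt_inv {n : Type*} [Fintype n] [DecidableEq n] (A : n → n → 𝕜)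
    (hA : IsUnit (of A).det) :
    HasFDerivAt (fun M : n → n → 𝕜 => of.symm (of M)⁻¹)
      (-(mulLeftCLM n (of A)⁻¹ ∘L mulRightCLM n (of A)⁻¹)) A := by
  have : @CompleteSpace (Matrix n n 𝕜) (Matrix.linftyOpNormedRing).toUniformSpace :=
    FiniteDimensional.complete 𝕜 _
  let e : (n → n → 𝕜) ≃L[𝕜] Matrix n n 𝕜 := (ofLinearEquiv 𝕜).toContinuousLinearEquiv
  have hu : IsUnit (of A) := (isUnit_iff_isUnit_det _).2 hA
  have h := e.symm.hasFDerivAt.comp A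
    ((hasFDerivAt_ringInverse (𝕜 := 𝕜) hu.unit).comp A e.hasFDerivAt)
  have hf : (fun M : n → n → 𝕜 => of.symm (of M)⁻¹) = e.symm ∘ Ring.inverse ∘ e := by
    funext M
    simp [e, nonsing_inv_eq_ringInverse]
  rw [hf]
  refine h.congr_fderiv ?_
  ext H : 1
  simp only [coe_units_inv, IsUnit.unit_spec, ContinuousLinearMap.neg_comp,
    ContinuousLinearMap.comp_neg, _root_.neg_apply, ContinuousLinearMap.comp_apply,
    ContinuousLinearMap.mulLeftRight_apply, Matrix.mul_assoc, mulRightCLM_apply,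
    mulLeftCLM_apply, Equiv.apply_symm_apply, neg_inj, e]
  rfl

end Calculus

section PartialMatrix

variable {𝕜 : Type*} [NontriviallyNormedField 𝕜] {l m n p : Type*}
  [Fintype l] [Fintype m] [Fintype n] [Fintype p]
  [DecidableEq l] [DecidableEq m] [DecidableEq n] [DecidableEq p]

def partialMatrix (φ : (m → n → 𝕜) →L[𝕜] 𝕜) : Matrix m n 𝕜 :=
  of fun i j => φ (Pi.single i (Pi.single j 1))

theorem apply_eq_sum_partialMatrix (φ : (m → n → 𝕜) →L[𝕜] 𝕜) (K : m → n → 𝕜) :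
    φ K = ∑ i, ∑ j, K i j * partialMatrix φ i j := by
  have hK : K = ∑ i, ∑ j, K i j • (Pi.single i (Pi.single j 1) : m → n → 𝕜) := by
    ext i j
    simp [Finset.sum_apply, Pi.single_apply, ite_apply]
  conv_lhs => rw [hK]
  simp [partialMatrix]

omit [Fintype l] [Fintype n] [DecidableEq l] [DecidableEq n] in
theorem mul_single_mul_apply (X : Matrix l m 𝕜) (Y : Matrix p n 𝕜) (a : m) (b : p) (i : l)
    (j : n) : (X * single a b (1 : 𝕜) * Y) i j = X i a * Y b j := by
  simp [mul_apply, single_apply, ite_and]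

theorem apply_mul_single_mul (φ : (l → n → 𝕜) →L[𝕜] 𝕜) (X : Matrix l m 𝕜) (Y : Matrix p n 𝕜)
    (a : m) (b : p) :
    φ (of.symm (X * single a b (1 : 𝕜) * Y)) = (Xᵀ * partialMatrix φ * Yᵀ) a b := by
  rw [apply_eq_sum_partialMatrix]
  simp only [of_symm_apply, mul_single_mul_apply]
  simp only [mul_apply, transpose_apply, Finset.sum_mul]
  rw [Finset.sum_comm]
  refine Finset.sum_congr rfl fun j _ => Finset.sum_congr rfl fun i _ => ?_
  ring

end PartialMatrix

theorem partialMatrix_fderiv_det_mul_comp_mul_inv {𝕜 : Type*} [NontriviallyNormedField 𝕜]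
    [CompleteSpace 𝕜] {l n : Type*} [Fintype l] [Fintype n] [DecidableEq l] [DecidableEq n]
    (P : Matrix l n 𝕜) (ℓ : (l → n → 𝕜) → 𝕜) (A : n → n → 𝕜) (hA : IsUnit (of A).det)
    (hℓ : DifferentiableAt 𝕜 ℓ (of.symm (P * (of A)⁻¹))) :
    partialMatrix (fderiv 𝕜 (fun M : n → n → 𝕜 => (of M).det * ℓ (of.symm (P * (of M)⁻¹))) A) =
      -(of A).det •
          ((of A)⁻¹ᵀ * Pᵀ * partialMatrix (fderiv 𝕜 ℓ (of.symm (P * (of A)⁻¹))) * (of A)⁻¹ᵀ)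
        + ((of A).det * ℓ (of.symm (P * (of A)⁻¹))) • (of A)⁻¹ᵀ := by
  have hPinv := (mulLeftCLM n P).hasFDerivAt.comp A (hasFDerivAt_inv A hA)
  have hL : HasFDerivAt (fun M : n → n → 𝕜 => (of M).det * ℓ (of.symm (P * (of M)⁻¹))) _ A :=
    (hasFDerivAt_det A).mul (hℓ.hasFDerivAt.comp A hPinv)
  rw [hL.fderiv]
  have hadj : adjugate (of A) = (of A).det • (of A)⁻¹ := by
    rw [inv_def, smul_smul, Ring.mul_inverse_cancel _ hA, one_smul]
  ext a b
  have hdir : P * ((of A)⁻¹ * (of (Pi.single a (Pi.single b 1)) * (of A)⁻¹))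
      = P * (of A)⁻¹ * single a b (1 : 𝕜) * (of A)⁻¹ := by
    rw [← single_eq_of_single_single, Matrix.mul_assoc, Matrix.mul_assoc]
  simp only [partialMatrix, of_apply, _root_.add_apply, _root_.smul_apply, smul_eq_mul,
    ContinuousLinearMap.comp_neg, _root_.neg_apply, ContinuousLinearMap.comp_apply,
    mulRightCLM_apply, mulLeftCLM_apply, Equiv.apply_symm_apply,
    linearDeriv_detRowContinuousMultilinear_single, hadj, hdir, apply_mul_single_mul, transpose_mul,
    add_apply, smul_apply, transpose_apply]
  ring

section NoetherTensor

variable {R : Type*} [CommRing R] {l m n : Type*} [Fintype l] [Fintype m] [Fintype n]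
  [DecidableEq n]

def noetherTensor (F G : Matrix m n R) (L : R) : Matrix n n R :=
  Fᵀ * G - L • 1

theorem noetherTensor_pullback (A : Matrix n n R) (hA : IsUnit A.det) (P G : Matrix l n R)
    (c : R) :
    noetherTensor A (-A.det • (A⁻¹ᵀ * Pᵀ * G * A⁻¹ᵀ) + (A.det * c) • A⁻¹ᵀ) (A.det * c)
      = -(A.det • (Aᵀ * noetherTensor (P * A⁻¹) G c * A⁻¹ᵀ)) - (A.det * c) • 1 := by
  have h : Aᵀ * A⁻¹ᵀ = 1 := by rw [← transpose_mul, nonsing_inv_mul _ hA, transpose_one]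
  simp only [noetherTensor, transpose_mul, Matrix.mul_add, Matrix.mul_sub, Matrix.sub_mul,
    Matrix.mul_smul, Matrix.smul_mul, ← Matrix.mul_assoc, h, Matrix.one_mul, Matrix.mul_one]
  module

end NoetherTensor

end Matrix

/-- derivative of the pulled-back Lagrangian density
`L₀(A) = det A · ℓ(Tπ A⁻¹)` with respect to the Jacobian variable `A = TΦ`:
`∂L₀/∂TΦ = −J_Φ (TΦ)^{-⋆}(Tπ)^⋆ (∂ℓ/∂TΨ̃)(TΦ)^{-⋆} + L₀ (TΦ)^{-⋆}`, and the Noether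
tensor of Φ equals `−J_Φ (TΦ)^⋆ (𝕋^N_{Ψ̃}) (TΦ)^{-⋆} − L₀ I⋆` where
`𝕋^N_{Ψ̃} = (TΨ̃)^⋆ (∂ℓ/∂TΨ̃) − ℓ I⋆`. -/
theorem pulled_back_lagrangian_derivative_and_noether_tensor (r n : ℕ)
    (Tπ : Fin r → Fin n → ℝ)
    (ℓ : (Fin r → Fin n → ℝ) → ℝ) (hℓ : Differentiable ℝ ℓ)
    (A₀ : Fin n → Fin n → ℝ) (hA : IsUnit (Matrix.of A₀).det)
    -- pulled-back Lagrangian density on the invertible matrix variable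
    (Lz : (Fin n → Fin n → ℝ) → ℝ)
    (hLz : ∀ A : Fin n → Fin n → ℝ,
      Lz A = (Matrix.of A).det * ℓ (fun i ν => (Matrix.of Tπ * (Matrix.of A)⁻¹) i ν))
    -- Q = TΨ̃ = Tπ (TΦ)⁻¹ at the point under consideration
    (Q : Fin r → Fin n → ℝ)
    (hQ : ∀ i ν, Q i ν = (Matrix.of Tπ * (Matrix.of A₀)⁻¹) i ν)
    -- E = ∂ℓ/∂TΨ̃ at Q
    (E : Fin r → Fin n → ℝ)
    (hE : ∀ I α, E I α = fderiv ℝ ℓ Q (Pi.single I (Pi.single α 1)))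
    -- D = ∂L₀/∂TΦ at A₀
    (D : Fin n → Fin n → ℝ)
    (hD : ∀ a b, D a b = fderiv ℝ Lz A₀ (Pi.single a (Pi.single b 1))) :
    (∀ a b, D a b =
        -(Matrix.of A₀).det *
            ((((Matrix.of A₀)⁻¹)ᵀ) * (Matrix.of Tπ)ᵀ * Matrix.of E * (((Matrix.of A₀)⁻¹)ᵀ)) a b
          + Lz A₀ * (((Matrix.of A₀)⁻¹)ᵀ) a b)
    ∧ ((Matrix.of A₀)ᵀ * Matrix.of D - Lz A₀ • (1 : Matrix (Fin n) (Fin n) ℝ)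
        = -((Matrix.of A₀).det •
              ((Matrix.of A₀)ᵀ *
                ((Matrix.of Q)ᵀ * Matrix.of E - ℓ Q • (1 : Matrix (Fin n) (Fin n) ℝ)) *
                (((Matrix.of A₀)⁻¹)ᵀ)))
          - Lz A₀ • (1 : Matrix (Fin n) (Fin n) ℝ)) := by
  have hQmat : of Q = of Tπ * (of A₀)⁻¹ := Matrix.ext hQ
  have hLzfun : Lz = fun M => (of M).det * ℓ (of.symm (of Tπ * (of M)⁻¹)) := funext hLz
  have hLzA : Lz A₀ = (of A₀).det * ℓ Q := by rw [hLz, ← hQmat]; rfl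
  have hDformula : of D = -(of A₀).det • ((of A₀)⁻¹ᵀ * (of Tπ)ᵀ * of E * (of A₀)⁻¹ᵀ)
      + Lz A₀ • (of A₀)⁻¹ᵀ := by
    have hEpartial : of E = partialMatrix (fderiv ℝ ℓ Q) := Matrix.ext hE
    have hDpartial : of D = partialMatrix (fderiv ℝ Lz A₀) := Matrix.ext hD
    rw [hDpartial, hLzA, hLzfun, partialMatrix_fderiv_det_mul_comp_mul_inv _ _ _ hA (hℓ _),
      ← hQmat, Equiv.symm_apply_apply, hEpartial]
  refine ⟨fun a b => by simpa using congrFun₂ hDformula a b, ?_⟩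
  rw [hDformula, hQmat, hLzA]
  exact noetherTensor_pullback _ hA _ _ _
end
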